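/- In the setting of the AR sequence 0 → N →^h E →^p τ^{-1}N → 0 with E = P^{⊕n} and h with components f_1,…,f_n a left basis of Hom(N,P), the canonical element Σ_i φ_i ⊗ f_i ∈ *Hom(N,P) ⊗_{End(P)} Hom(N,P) (with {φ_i} the right dual basis) maps to zero under the composition induced by Ψ: *Hom(N,P) → Hom(P, τ^{-1}N) followed by composition of morphisms Hom(P, τ^{-1}N) ⊗ Hom(N,P) → Hom(N, τ^{-1}N). -/

import Mathlib

/-!
STATEMENT 7: In the setting of the AR sequence 0 → N →^h E →^p τ⁻¹N → 0 with
E = P^{⊕n} and the components f_1,…,f_n of h a left End(P)-basis of Hom(N,P),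
the canonical element Σ_i φ_i ⊗ f_i ∈ *Hom(N,P) ⊗_{End P} Hom(N,P) (φ_i the
right dual basis) maps to zero under the map induced by
Ψ : *Hom(N,P) → Hom(P, τ⁻¹N) followed by composition
Hom(P, τ⁻¹N) ⊗ Hom(N,P) → Hom(N, τ⁻¹N).

Concretely, the image of Σ_i φ_i ⊗ f_i under this composition is
Σ_i f_i ≫ Ψ(φ_i), and the statement is that this sum vanishes, where
Ψ(φ) = Σ_j φ(f_j) ≫ g_j ≫ p (g_j the j-th inclusion P → E).
-/

open CategoryTheory CategoryTheory.Limits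

noncomputable section

attribute [local instance] CategoryTheory.Abelian.hasFiniteBiproducts

variable {k : Type*} [Field k]
variable {C : Type*} [Category C] [Abelian C] [Linear k C]
variable {N P N' : C} {n : ℕ}

/-- The map `Ψ : *Hom(N,P) → Hom(P, τ⁻¹N)`, `Ψ(φ) = Σ_j φ(f_j) ≫ g_j ≫ p`. -/
def Psi (h : N ⟶ (⨁ fun _ : Fin n => P)) (p : (⨁ fun _ : Fin n => P) ⟶ N')
    (φ : (N ⟶ P) →ₗ[End P] End P) : P ⟶ N' :=
  ∑ j : Fin n, (φ (h ≫ biproduct.π (fun _ : Fin n => P) j) : P ⟶ P) ≫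
      biproduct.ι (fun _ : Fin n => P) j ≫ p

theorem Psi_coord_eq_ι_comp {h : N ⟶ (⨁ fun _ : Fin n => P)} (p : (⨁ fun _ : Fin n => P) ⟶ N')
    (bb : Module.Basis (Fin n) (End P) (N ⟶ P))
    (hbb : ∀ i, bb i = h ≫ biproduct.π (fun _ : Fin n => P) i) (i : Fin n) :
    Psi h p (bb.coord i) = biproduct.ι (fun _ : Fin n => P) i ≫ p := by
  simp only [Psi, ← hbb, Module.Basis.coord_apply, Module.Basis.repr_self, Finsupp.single_apply]
  rw [Finset.sum_eq_single_of_mem i (Finset.mem_univ i) fun j _ hji => by simp [hji]]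
  simp

theorem sum_comp_biproduct_π_comp_ι_comp {D : Type*} [Category D] [Preadditive D] {J : Type}
    [Fintype J] {f : J → D} [HasBiproduct f] {X Y : D} (h : X ⟶ ⨁ f) (p : ⨁ f ⟶ Y) :
    ∑ j, (h ≫ biproduct.π f j) ≫ biproduct.ι f j ≫ p = h ≫ p := by
  calc ∑ j, (h ≫ biproduct.π f j) ≫ biproduct.ι f j ≫ p
      = h ≫ (∑ j, biproduct.π f j ≫ biproduct.ι f j) ≫ p := by
        simp only [Preadditive.comp_sum, Preadditive.sum_comp, Category.assoc]
    _ = h ≫ p := by rw [biproduct.total, Category.id_comp]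

theorem stmt7_general
    -- the AR sequence 0 → N → P^{⊕n} → N' (= τ⁻¹N) → 0
    (h : N ⟶ (⨁ fun _ : Fin n => P)) (p : (⨁ fun _ : Fin n => P) ⟶ N')
    (w : h ≫ p = 0)
    -- the components of h form a left End(P)-basis of Hom(N, P):
    (bb : Module.Basis (Fin n) (End P) (N ⟶ P))
    (hbb : ∀ i, bb i = h ≫ biproduct.π (fun _ : Fin n => P) i) :
    -- Σ_i f_i ≫ Ψ(φ_i) = 0:
    (∑ i : Fin n, bb i ≫ Psi h p (bb.coord i)) = 0 := by
  calc ∑ i, bb i ≫ Psi h p (bb.coord i)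
      = ∑ i, (h ≫ biproduct.π _ i) ≫ biproduct.ι (fun _ : Fin n => P) i ≫ p :=
        Finset.sum_congr rfl fun i _ => by rw [Psi_coord_eq_ι_comp p bb hbb, hbb]
    _ = h ≫ p := sum_comp_biproduct_π_comp_ι_comp h p
    _ = 0 := w

theorem stmt7
    (hfin : ∀ X Y : C, FiniteDimensional k (X ⟶ Y))
    (hNindec : ¬ IsZero N) (hPindec : ¬ IsZero P)
    (hdivP : ∀ φ : End P, φ ≠ 0 → IsUnit φ)
    -- the AR sequence 0 → N → P^{⊕n} → N' (= τ⁻¹N) → 0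
    (h : N ⟶ (⨁ fun _ : Fin n => P)) (p : (⨁ fun _ : Fin n => P) ⟶ N')
    (w : h ≫ p = 0) (hses : (ShortComplex.mk h p w).ShortExact)
    (hnonsplit : ¬ ∃ r : (⨁ fun _ : Fin n => P) ⟶ N, h ≫ r = 𝟙 N)
    (halmostsplit : ∀ (X : C) (f : N ⟶ X),
        (¬ ∃ r : X ⟶ N, f ≫ r = 𝟙 N) → ∃ g : (⨁ fun _ : Fin n => P) ⟶ X, h ≫ g = f)
    -- the components of h form a left End(P)-basis of Hom(N, P):
    (bb : Module.Basis (Fin n) (End P) (N ⟶ P))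
    (hbb : ∀ i, bb i = h ≫ biproduct.π (fun _ : Fin n => P) i) :
    -- Σ_i f_i ≫ Ψ(φ_i) = 0:
    (∑ i : Fin n, bb i ≫ Psi h p (bb.coord i)) = 0 :=
  stmt7_general h p w bb hbb

end
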